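/- With the data of the poset D defined above (for an object (A,B,f) of T/𝒜 with the chosen λ-directed presentations of A, B, and each T A_i), the poset (D, ≤) is λ-directed: every subset S ⊆ D of cardinality less than λ has an upper bound in D. -/

import Mathlib

set_option linter.unusedSectionVars false

universe v u

open CategoryTheory Limits Opposite

/-- A poset is `κ`-directed if every subset of cardinality `< κ` has an upper bound. -/
def IsCardinalDirected (κ : Cardinal.{v}) (D : Type v) [Preorder D] : Prop :=
  ∀ S : Set D, Cardinal.mk S < κ → ∃ b : D, ∀ s ∈ S, s ≤ b

variable {C : Type u} [Category.{v} C] (T : C ⥤ C)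
  {I : Type v} [PartialOrder I] {K : Type v} [PartialOrder K]
  {J : I → Type v} [∀ i, PartialOrder (J i)]
  (A : I ⥤ C) (B : K ⥤ C) (Pf : ∀ i, J i ⥤ C)
  (cA : Cocone A) (cB : Cocone B)
  (pc : ∀ i, Pf i ⟶ (Functor.const (J i)).obj (T.obj (A.obj i)))
  (f : T.obj cA.pt ⟶ cB.pt)

/-- An element of the poset `D_{(A,B,f)}`: a tuple `(i, j, k, q)` with
`q : P_{i,j} ⟶ B_k` such that `f ∘ Tα_i ∘ p_{i,j} = β_k ∘ q`. -/
structure DElem : Type v where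
  i : I
  j : J i
  k : K
  q : (Pf i).obj j ⟶ B.obj k
  compat : (pc i).app j ≫ T.map (cA.ι.app i) ≫ f = q ≫ cB.ι.app k

/-- Transport of objects of `P` along an equality of indices. -/
theorem DElem.obj_eq {i i' : I} (h : i = i') (j : J i) :
    (Pf i).obj j = (Pf i').obj (congrArg J h ▸ j) := by subst h; rfl

/-- The ordering on `D_{(A,B,f)}`: `(i,j,k,q) ≤ (i',j',k',q')` iff either (AA) `i = i'`,
`j ≤ j'`, `k ≤ k'` and `β_{k→k'} ∘ q = q' ∘ p_{i,j→j'}`, or (BB) `i < i'`, `k ≤ k'` and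
there is `r : P_{i,j} ⟶ P_{i',j'}` with `Tα_{i→i'} ∘ p_{i,j} = p_{i',j'} ∘ r` and
`β_{k→k'} ∘ q = q' ∘ r`. -/
def DLe (d d' : DElem T A B Pf cA cB pc f) : Prop :=
  (∃ hi : d.i = d'.i, ∃ hj : (congrArg J hi ▸ d.j : J d'.i) ≤ d'.j, ∃ hk : d.k ≤ d'.k,
    d.q ≫ B.map (homOfLE hk) =
      (eqToHom (DElem.obj_eq Pf hi d.j) ≫ (Pf d'.i).map (homOfLE hj)) ≫ d'.q) ∨
  (∃ hlt : d.i < d'.i, ∃ hk : d.k ≤ d'.k,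
    ∃ r : (Pf d.i).obj d.j ⟶ (Pf d'.i).obj d'.j,
      (pc d.i).app d.j ≫ T.map (A.map (homOfLE hlt.le)) = r ≫ (pc d'.i).app d'.j ∧
      d.q ≫ B.map (homOfLE hk) = r ≫ d'.q)

/-- An object `X` is `κ`-presentable if `Hom(X, -)` preserves colimits indexed by
`κ`-directed posets. -/
def IsPresentableObj (κ : Cardinal.{v}) {𝒞 : Type u} [Category.{v} 𝒞] (X : 𝒞) : Prop :=
  ∀ (D : Type v) [PartialOrder D], IsCardinalDirected κ D →
    Nonempty (PreservesColimitsOfShape D (coyoneda.obj (op X)))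

/-!
Bound the first indices of `S` by `i*`. Presentability of each `P_{i,j}` factors
`Tα_{i→i*} ∘ p_{i,j}` through some `P_{i*,j'}`, and bounding these `j'` by `j*` gives maps
`r_s : P_{i,j} ⟶ P_{i*,j*}` over `Tα_{i→i*}`, which are the transition maps when `i = i*`.
Presentability of `P_{i*,j*}` factors `f ∘ Tα_{i*} ∘ p_{i*,j*}` through some
`q : P_{i*,j*} ⟶ B_{k₁}`, and presentability of each `P_{i,j}` makes `q_s` and `q ∘ r_s` agree
at some stage `e_s ≥ k, k₁` of `B`. Any common bound `k*` of `k₁` and the `e_s` yields the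
upper bound `(i*, j*, k*, β_{k₁→k*} ∘ q)`; all bounds exist because `S` has fewer than `λ`
elements.
-/

open Cardinal

section Directed

variable {κ : Cardinal.{v}} {D : Type v} [Preorder D]

theorem IsCardinalDirected.exists_forall_le (hD : IsCardinalDirected κ D) {ι : Type v}
    (g : ι → D) (hι : #ι < κ) : ∃ b, ∀ x, g x ≤ b := by
  obtain ⟨b, hb⟩ := hD (Set.range g) (mk_range_le.trans_lt hι)
  exact ⟨b, fun x => hb _ ⟨x, rfl⟩⟩

theorem IsCardinalDirected.exists_le_and_forall_le (hκ : ℵ₀ ≤ κ)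
    (hD : IsCardinalDirected κ D) (d : D) {ι : Type v} (g : ι → D) (hι : #ι < κ) :
    ∃ b, d ≤ b ∧ ∀ x, g x ≤ b := by
  obtain ⟨b, hb⟩ := hD.exists_forall_le (fun o : Option ι => o.elim d g)
    (by rw [mk_option]; exact add_lt_of_lt hκ hι (one_lt_aleph0.trans_le hκ))
  exact ⟨b, hb none, fun x => hb (some x)⟩

theorem IsCardinalDirected.isDirected (hκ : ℵ₀ ≤ κ) (hD : IsCardinalDirected κ D) :
    IsDirected D (· ≤ ·) := by
  refine ⟨fun a b => ?_⟩
  obtain ⟨c, hac, hbc⟩ := hD.exists_le_and_forall_le hκ a (fun _ : PUnit => b)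
    (by simpa using one_lt_aleph0.trans_le hκ)
  exact ⟨c, hac, hbc ⟨⟩⟩

end Directed

section Presentable

variable {κ : Cardinal.{v}} {𝒞 : Type u} [Category.{v} 𝒞] {D : Type v} [PartialOrder D]
  {F : D ⥤ 𝒞} {c : Cocone F} {X : 𝒞}

theorem IsPresentableObj.exists_comp_ι_eq (hX : IsPresentableObj κ X)
    (hD : IsCardinalDirected κ D) (hc : IsColimit c) (g : X ⟶ c.pt) :
    ∃ d, ∃ g' : X ⟶ F.obj d, g' ≫ c.ι.app d = g := by
  obtain ⟨_⟩ := hX D hD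
  exact Types.jointly_surjective _ (isColimitOfPreserves (coyoneda.obj (op X)) hc) g

theorem IsPresentableObj.exists_comp_map_eq (hκ : ℵ₀ ≤ κ) (hX : IsPresentableObj κ X)
    (hD : IsCardinalDirected κ D) (hc : IsColimit c) {d d' : D} (u : X ⟶ F.obj d)
    (v : X ⟶ F.obj d') (h : u ≫ c.ι.app d = v ≫ c.ι.app d') :
    ∃ e, ∃ (hd : d ≤ e) (hd' : d' ≤ e),
      u ≫ F.map (homOfLE hd) = v ≫ F.map (homOfLE hd') := by
  obtain ⟨_⟩ := hX D hD
  have := hD.isDirected hκ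
  obtain ⟨e, φ, ψ, he⟩ := (Types.FilteredColimit.isColimit_eq_iff _
    (isColimitOfPreserves (coyoneda.obj (op X)) hc)).mp h
  exact ⟨e, leOfHom φ, leOfHom ψ, he⟩

end Presentable

section UpperBound

variable {T A B Pf cA cB pc f} {κ : Cardinal.{v}}

variable (pc) in
/-- `r` is a connecting map as in (BB), and the transition map of (AA) when `i = i'`. -/
def IsConnecting {i i' : I} (hi : i ≤ i') {j : J i} {j' : J i'}
    (r : (Pf i).obj j ⟶ (Pf i').obj j') : Prop :=
  r ≫ (pc i').app j' = (pc i).app j ≫ T.map (A.map (homOfLE hi)) ∧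
    ∀ h : i = i', ∃ hj : congrArg J h ▸ j ≤ j',
      r = eqToHom (DElem.obj_eq Pf h j) ≫ (Pf i').map (homOfLE hj)

theorem IsConnecting.comp_map {i i' : I} {hi : i ≤ i'} {j : J i} {j' j'' : J i'}
    {r : (Pf i).obj j ⟶ (Pf i').obj j'} (hr : IsConnecting pc hi r) (hj : j' ≤ j'') :
    IsConnecting pc hi (r ≫ (Pf i').map (homOfLE hj)) := by
  refine ⟨?_, fun h => ?_⟩
  · simpa [(pc i').naturality] using hr.1
  · obtain ⟨hj₀, hr₀⟩ := hr.2 h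
    exact ⟨hj₀.trans hj, by simp [hr₀, ← Functor.map_comp]⟩

theorem exists_isConnecting {i i' : I} (hi : i ≤ i') (j : J i)
    (hJ : IsCardinalDirected κ (J i')) (hP : IsPresentableObj κ ((Pf i).obj j))
    (hcP : IsColimit (Cocone.mk (T.obj (A.obj i')) (pc i'))) :
    ∃ (j' : J i') (r : (Pf i).obj j ⟶ (Pf i').obj j'), IsConnecting pc hi r := by
  by_cases h : i = i'
  · subst h
    exact ⟨j, 𝟙 _, by simp, fun _ => ⟨le_rfl, by simp⟩⟩
  · obtain ⟨j', r, hr⟩ := hP.exists_comp_ι_eq hJ hcP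
      ((pc i).app j ≫ T.map (A.map (homOfLE hi)))
    exact ⟨j', r, hr, fun h' => absurd h' h⟩

theorem exists_common_isConnecting (hI : IsCardinalDirected κ I)
    (hJ : ∀ i, IsCardinalDirected κ (J i))
    (hcP : ∀ i, Nonempty (IsColimit (Cocone.mk (T.obj (A.obj i)) (pc i))))
    {ι : Type v} (hι : #ι < κ) (i : ι → I) (j : ∀ x, J (i x))
    (hP : ∀ x, IsPresentableObj κ ((Pf (i x)).obj (j x))) :
    ∃ (i' : I) (j' : J i') (hi : ∀ x, i x ≤ i')
      (r : ∀ x, (Pf (i x)).obj (j x) ⟶ (Pf i').obj j'),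
      ∀ x, IsConnecting pc (hi x) (r x) := by
  obtain ⟨i', hi⟩ := hI.exists_forall_le i hι
  choose j₀ r₀ hr₀ using fun x =>
    exists_isConnecting (hi x) (j x) (hJ i') (hP x) (hcP i').some
  obtain ⟨j', hj⟩ := (hJ i').exists_forall_le j₀ hι
  exact ⟨i', j', hi, _, fun x => (hr₀ x).comp_map (hj x)⟩

theorem exists_common_factorization (hκ : ℵ₀ ≤ κ) (hK : IsCardinalDirected κ K)
    (hcB : IsColimit cB) {ι : Type v} (hι : #ι < κ) (s : ι → DElem T A B Pf cA cB pc f)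
    (hPs : ∀ x, IsPresentableObj κ ((Pf (s x).i).obj (s x).j))
    {i : I} {j : J i} (hP : IsPresentableObj κ ((Pf i).obj j))
    (hi : ∀ x, (s x).i ≤ i) (r : ∀ x, (Pf (s x).i).obj (s x).j ⟶ (Pf i).obj j)
    (hr : ∀ x, IsConnecting pc (hi x) (r x)) :
    ∃ (k : K) (q : (Pf i).obj j ⟶ B.obj k)
      (_ : (pc i).app j ≫ T.map (cA.ι.app i) ≫ f = q ≫ cB.ι.app k),
      ∀ x, ∃ hk : (s x).k ≤ k, (s x).q ≫ B.map (homOfLE hk) = r x ≫ q := by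
  obtain ⟨k₁, q₁, hq₁⟩ :=
    hP.exists_comp_ι_eq hK hcB ((pc i).app j ≫ T.map (cA.ι.app i) ≫ f)
  have hsq (x) : (s x).q ≫ cB.ι.app (s x).k = (r x ≫ q₁) ≫ cB.ι.app k₁ := by
    rw [← (s x).compat, Category.assoc, hq₁, reassoc_of% (hr x).1, ← T.map_comp_assoc, cA.w]
  choose e hse hk₁e he using fun x => (hPs x).exists_comp_map_eq hκ hK hcB _ _ (hsq x)
  obtain ⟨k, hk₁, hek⟩ := hK.exists_le_and_forall_le hκ k₁ e hι
  refine ⟨k, q₁ ≫ B.map (homOfLE hk₁), by simp [← hq₁],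
    fun x => ⟨(hse x).trans (hek x), ?_⟩⟩
  calc (s x).q ≫ B.map (homOfLE _)
      = ((s x).q ≫ B.map (homOfLE (hse x))) ≫ B.map (homOfLE (hek x)) := by
        simp [← Functor.map_comp]
    _ = ((r x ≫ q₁) ≫ B.map (homOfLE (hk₁e x))) ≫ B.map (homOfLE (hek x)) := by rw [he x]
    _ = r x ≫ q₁ ≫ B.map (homOfLE hk₁) := by simp [← Functor.map_comp]

theorem DLe_of_isConnecting {d d' : DElem T A B Pf cA cB pc f} {hi : d.i ≤ d'.i}
    {r : (Pf d.i).obj d.j ⟶ (Pf d'.i).obj d'.j} (hr : IsConnecting pc hi r) (hk : d.k ≤ d'.k)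
    (hq : d.q ≫ B.map (homOfLE hk) = r ≫ d'.q) : DLe T A B Pf cA cB pc f d d' := by
  rcases hi.eq_or_lt with h | h
  · obtain ⟨hj, rfl⟩ := hr.2 h
    exact Or.inl ⟨h, hj, hk, hq⟩
  · exact Or.inr ⟨h, hk, r, hr.1.symm, hq⟩

end UpperBound

theorem DLe_directed (κ : Cardinal.{v}) (hκ : κ.IsRegular)
    (hI : IsCardinalDirected κ I) (hK : IsCardinalDirected κ K)
    (hJ : ∀ i, IsCardinalDirected κ (J i))
    (hP : ∀ i (j : J i), IsPresentableObj κ ((Pf i).obj j))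
    (hcB : IsColimit cB)
    (hcP : ∀ i, Nonempty (IsColimit (Cocone.mk (T.obj (A.obj i)) (pc i)))) :
    ∀ S : Set (DElem T A B Pf cA cB pc f), Cardinal.mk S < κ →
      ∃ ub : DElem T A B Pf cA cB pc f, ∀ s ∈ S, DLe T A B Pf cA cB pc f s ub := by
  intro S hS
  obtain ⟨i, j, hi, r, hr⟩ :=
    exists_common_isConnecting hI hJ hcP hS (fun s : S => s.1.i) (fun s => s.1.j) fun _ => hP _ _
  obtain ⟨k, q, hq, hk⟩ := exists_common_factorization hκ.aleph0_le hK hcB hS Subtype.val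
    (fun _ => hP _ _) (hP i j) hi r hr
  refine ⟨⟨i, j, k, q, hq⟩, fun s hs => ?_⟩
  obtain ⟨hsk, hsq⟩ := hk ⟨s, hs⟩
  exact DLe_of_isConnecting (hr ⟨s, hs⟩) hsk hsq
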